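/- Let G be a countable set, H₀ a bounded self-adjoint operator on ℓ²(G), ψ ∈ ℓ²(G) a unit vector, and for v ∈ ℝ let H_v = H₀ + v P_ψ where P_ψ is the orthogonal projection onto ℂψ. Fix v ≠ 0 and E ∈ ℝ, and let γ := lim_{η↓0} ‖(H₀ − (E + iη))⁻¹ ψ‖², a limit which exists in (0, ∞] by monotonicity. Then the following are equivalent: (i) the orthogonal projection of ψ onto ker(H_v − E) is nonzero (i.e. E is an eigenvalue of H_v whose eigenspace is not orthogonal to ψ); (ii) γ < ∞ and lim_{η↓0} ⟨ψ, (H₀ − (E + iη))⁻¹ ψ⟩ exists and equals −1/v. Moreover, if these conditions hold, then ⟨ψ, P ψ⟩ = v⁻² / γ, where P denotes the orthogonal projection onto ker(H_v − E). -/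

import Mathlib

/-!
Write `T = H₀ - E` and `R η = (T - iη)⁻¹`. Since `P` has rank one, `ker (H_v - E)` consists of
the `φ` with `T φ = -v ⟪ψ, φ⟫ ψ`, so an eigenvector not orthogonal to `ψ` exists iff `ψ = T φ₀`
for some `φ₀` with `⟪ψ, φ₀⟫ = -1/v`.

If `ψ = T φ₀`, then `R η ψ = φ₀ + iη R η φ₀` stays bounded and `⟪ψ, R η ψ⟫ → ⟪ψ, φ₀⟫`.
Conversely, comparing imaginary parts of `⟪x - y, T (x - y)⟫` for `x = R η ψ`, `y = R η' ψ` gives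
`(η + η') ‖x - y‖² = (η - η') (‖y‖² - ‖x‖²)`: so `‖R η ψ‖²` increases as `η ↓ 0` and, if it stays
bounded, `R η ψ` is Cauchy. Its limit `φ₀` solves `T φ₀ = ψ`, has `‖φ₀‖² = γ`, and is orthogonal
to `ker T`.

For `φ` in the eigenspace, `φ + v ⟪ψ, φ⟫ φ₀ ∈ ker T`, hence `⟪φ₀, φ⟫ = -v γ ⟪ψ, φ⟫`. For the
projection `χ` of `ψ` we also have `⟪φ₀, χ⟫ = ⟪φ₀, ψ⟫ = -1/v`, which gives `⟪ψ, χ⟫ = v⁻²/γ`.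
-/

open Filter Topology Set
open Complex (I)
open scoped ENNReal
open scoped InnerProductSpace

theorem IsSelfAdjoint.isUnit_sub_smul_one {A : Type*} [CStarAlgebra A] {a : A}
    (ha : IsSelfAdjoint a) {z : ℂ} (hz : z.im ≠ 0) : IsUnit (a - z • 1) := by
  have hz' : z ∉ spectrum ℂ a := fun h => hz (by rw [ha.mem_spectrum_eq_re h]; simp)
  have := (spectrum.notMem_iff.mp hz').neg
  rwa [Algebra.algebraMap_eq_smul_one, neg_sub] at this

section Symmetric

variable {H : Type*} [NormedAddCommGroup H] [InnerProductSpace ℂ H] {T : H →L[ℂ] H}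

theorem norm_sub_I_smul_sq (hT : (T : H →ₗ[ℂ] H).IsSymmetric) (η : ℝ) (u : H) :
    ‖T u - ((η : ℂ) * I) • u‖ ^ 2 = ‖T u‖ ^ 2 + η ^ 2 * ‖u‖ ^ 2 := by
  have h : RCLike.re ⟪T u, ((η : ℂ) * I) • u⟫_ℂ = 0 := by
    have := hT.im_inner_apply_self u
    simp_all
  rw [@norm_sub_sq ℂ, h, norm_smul]
  simp [mul_pow]

theorem norm_apply_le_norm_sub_I_smul (hT : (T : H →ₗ[ℂ] H).IsSymmetric) (η : ℝ) (u : H) :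
    ‖T u‖ ≤ ‖T u - ((η : ℂ) * I) • u‖ := by
  refine le_of_sq_le_sq ?_ (norm_nonneg _)
  rw [norm_sub_I_smul_sq hT]
  nlinarith [sq_nonneg η, sq_nonneg ‖u‖]

theorem abs_mul_norm_le_norm_sub_I_smul (hT : (T : H →ₗ[ℂ] H).IsSymmetric) (η : ℝ) (u : H) :
    |η| * ‖u‖ ≤ ‖T u - ((η : ℂ) * I) • u‖ := by
  refine le_of_sq_le_sq ?_ (norm_nonneg _)
  rw [norm_sub_I_smul_sq hT, mul_pow, sq_abs]
  nlinarith [sq_nonneg ‖T u‖]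

theorem add_mul_norm_sub_sq_of_sub_I_smul_eq (hT : (T : H →ₗ[ℂ] H).IsSymmetric) {η η' : ℝ}
    {x y : H} (h : T x - ((η : ℂ) * I) • x = T y - ((η' : ℂ) * I) • y) :
    (η + η') * ‖x - y‖ ^ 2 = (η - η') * (‖y‖ ^ 2 - ‖x‖ ^ 2) := by
  have hd : T (x - y) = ((η : ℂ) * I) • x - ((η' : ℂ) * I) • y := by
    rw [map_sub]
    linear_combination (norm := module) h
  have him := hT.im_inner_self_apply (x - y)
  rw [ContinuousLinearMap.coe_coe, hd] at him
  simp only [inner_sub_left, inner_sub_right, inner_smul_right, RCLike.im_to_complex,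
    Complex.sub_im, Complex.sub_re, Complex.mul_im, Complex.mul_re, Complex.ofReal_re,
    Complex.ofReal_im, Complex.I_re, Complex.I_im] at him
  have hxx := inner_self_eq_norm_sq (𝕜 := ℂ) x
  have hyy := inner_self_eq_norm_sq (𝕜 := ℂ) y
  have hxy := inner_re_symm (𝕜 := ℂ) x y
  simp only [RCLike.re_to_complex] at hxx hyy hxy
  rw [@norm_sub_sq ℂ, RCLike.re_to_complex]
  linear_combination 2 * him - 2 * η * hxx - 2 * η' * hyy - 2 * η * hxy

theorem inner_sub_I_smul_of_apply_eq_zero (hT : (T : H →ₗ[ℂ] H).IsSymmetric) (η : ℝ) (x : H)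
    {w : H} (hw : T w = 0) : ⟪T x - ((η : ℂ) * I) • x, w⟫_ℂ = (η * I) * ⟪x, w⟫_ℂ := by
  rw [inner_sub_left, inner_smul_left, hT.apply_clm, hw, inner_zero_right]
  simp

end Symmetric

theorem cauchy_map_of_dist_sq_le {β E : Type*} [PseudoMetricSpace E] {l : Filter β} [l.NeBot]
    {g : β → E} {f : β → ℝ} {a : ℝ} (hf : Tendsto f l (𝓝 a))
    (hgf : ∀ᶠ p in l ×ˢ l, dist (g p.1) (g p.2) ^ 2 ≤ |f p.1 - f p.2|) :
    Cauchy (l.map g) := by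
  refine cauchy_map_iff'.2 (tendsto_uniformity_iff_dist_tendsto_zero.2 ?_)
  have hlim : Tendsto (fun p : β × β => √|f p.1 - f p.2|) (l ×ˢ l) (𝓝 0) := by
    simpa using ((((hf.comp tendsto_fst).sub (hf.comp tendsto_snd)).abs).sqrt)
  refine squeeze_zero' (Eventually.of_forall fun _ => dist_nonneg) ?_ hlim
  filter_upwards [hgf] with p hp
  exact Real.le_sqrt_of_sq_le hp

theorem ENNReal.iSup_ofReal_lt_top_iff {ι : Type*} {f : ι → ℝ} :
    ⨆ i, ENNReal.ofReal (f i) < ⊤ ↔ BddAbove (range f) := by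
  constructor
  · intro h
    refine ⟨(⨆ i, ENNReal.ofReal (f i)).toReal, ?_⟩
    rintro _ ⟨i, rfl⟩
    exact (ENNReal.ofReal_le_iff_le_toReal h.ne).1 (le_iSup (fun i => ENNReal.ofReal (f i)) i)
  · rintro ⟨M, hM⟩
    exact (iSup_le fun i => ENNReal.ofReal_le_ofReal (hM ⟨i, rfl⟩)).trans_lt ENNReal.ofReal_lt_top

section Resolvent

variable {H : Type*} [NormedAddCommGroup H] [InnerProductSpace ℂ H] [CompleteSpace H]

noncomputable def imResolvent (T : H →L[ℂ] H) (η : ℝ) : H →L[ℂ] H :=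
  Ring.inverse (T - ((η : ℂ) * I) • 1)

variable {T : H →L[ℂ] H} {η : ℝ}

theorem isUnit_sub_I_smul_one (hT : IsSelfAdjoint T) (hη : η ≠ 0) :
    IsUnit (T - ((η : ℂ) * I) • 1) :=
  hT.isUnit_sub_smul_one (by simpa using hη)

theorem apply_imResolvent_sub_I_smul (hT : IsSelfAdjoint T) (hη : η ≠ 0) (x : H) :
    T (imResolvent T η x) - ((η : ℂ) * I) • imResolvent T η x = x := by
  simpa [imResolvent] using congr($(Ring.mul_inverse_cancel _ (isUnit_sub_I_smul_one hT hη)) x)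

theorem imResolvent_apply_sub_I_smul (hT : IsSelfAdjoint T) (hη : η ≠ 0) (x : H) :
    imResolvent T η (T x - ((η : ℂ) * I) • x) = x := by
  simpa [imResolvent] using congr($(Ring.inverse_mul_cancel _ (isUnit_sub_I_smul_one hT hη)) x)

theorem imResolvent_apply (hT : IsSelfAdjoint T) (hη : η ≠ 0) (x : H) :
    imResolvent T η (T x) = x + ((η : ℂ) * I) • imResolvent T η x := by
  have h := imResolvent_apply_sub_I_smul hT hη x
  rw [map_sub, map_smul] at h
  exact sub_eq_iff_eq_add.1 h

theorem norm_imResolvent_apply_le (hT : IsSelfAdjoint T) (hη : η ≠ 0) (x : H) :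
    ‖imResolvent T η (T x)‖ ≤ 2 * ‖x‖ := by
  have h := abs_mul_norm_le_norm_sub_I_smul hT.isSymmetric η (imResolvent T η x)
  rw [apply_imResolvent_sub_I_smul hT hη] at h
  calc ‖imResolvent T η (T x)‖ = ‖x + ((η : ℂ) * I) • imResolvent T η x‖ := by
        rw [imResolvent_apply hT hη]
    _ ≤ ‖x‖ + |η| * ‖imResolvent T η x‖ := (norm_add_le _ _).trans (by simp [norm_smul])
    _ ≤ 2 * ‖x‖ := by linarith

theorem tendsto_inner_imResolvent_apply (hT : IsSelfAdjoint T) (x : H) :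
    Tendsto (fun η : ℝ => ⟪T x, imResolvent T η (T x)⟫_ℂ) (𝓝[≠] 0) (𝓝 ⟪T x, x⟫_ℂ) := by
  rw [tendsto_iff_norm_sub_tendsto_zero]
  refine squeeze_zero_norm' ?_ (a := fun η : ℝ => |η| * ‖x‖ ^ 2) ?_
  · filter_upwards [self_mem_nhdsWithin] with η (hη : η ≠ 0)
    have hTR := norm_apply_le_norm_sub_I_smul hT.isSymmetric η (imResolvent T η x)
    rw [apply_imResolvent_sub_I_smul hT hη] at hTR
    rw [imResolvent_apply hT hη, inner_add_right, add_sub_cancel_left, inner_smul_right,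
      hT.isSymmetric.apply_clm, norm_norm, norm_mul]
    have hin : ‖⟪x, T (imResolvent T η x)⟫_ℂ‖ ≤ ‖x‖ ^ 2 :=
      (norm_inner_le_norm x _).trans (by rw [sq]; gcongr)
    simpa using mul_le_mul_of_nonneg_left hin (abs_nonneg η)
  · have : Tendsto (fun η : ℝ => |η| * ‖x‖ ^ 2) (𝓝 0) (𝓝 (|0| * ‖x‖ ^ 2)) :=
      (continuous_abs.mul continuous_const).tendsto 0
    simpa using this.mono_left nhdsWithin_le_nhds

theorem add_mul_norm_imResolvent_sub_sq (hT : IsSelfAdjoint T) (ψ : H) {η η' : ℝ} (hη : η ≠ 0)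
    (hη' : η' ≠ 0) :
    (η + η') * ‖imResolvent T η ψ - imResolvent T η' ψ‖ ^ 2 =
      (η - η') * (‖imResolvent T η' ψ‖ ^ 2 - ‖imResolvent T η ψ‖ ^ 2) :=
  add_mul_norm_sub_sq_of_sub_I_smul_eq hT.isSymmetric <| by
    rw [apply_imResolvent_sub_I_smul hT hη, apply_imResolvent_sub_I_smul hT hη']

theorem antitoneOn_norm_imResolvent_sq (hT : IsSelfAdjoint T) (ψ : H) :
    AntitoneOn (fun η => ‖imResolvent T η ψ‖ ^ 2) (Ioi 0) := by
  intro η' (hη' : 0 < η') η (hη : 0 < η) hle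
  obtain rfl | hlt := hle.eq_or_lt
  · rfl
  have h := add_mul_norm_imResolvent_sub_sq hT ψ hη.ne' hη'.ne'
  by_contra! hcon
  nlinarith [sq_nonneg ‖imResolvent T η ψ - imResolvent T η' ψ‖]

theorem norm_imResolvent_sub_sq_le (hT : IsSelfAdjoint T) (ψ : H) {η η' : ℝ} (hη : 0 < η)
    (hη' : 0 < η') :
    ‖imResolvent T η ψ - imResolvent T η' ψ‖ ^ 2 ≤
      |‖imResolvent T η ψ‖ ^ 2 - ‖imResolvent T η' ψ‖ ^ 2| := by
  have h := congr_arg abs (add_mul_norm_imResolvent_sub_sq hT ψ hη.ne' hη'.ne')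
  rw [abs_mul, abs_mul, abs_of_pos (add_pos hη hη'), abs_of_nonneg (sq_nonneg _), abs_sub_comm
    (‖imResolvent T η' ψ‖ ^ 2)] at h
  have hle : |η - η'| ≤ η + η' := abs_sub_le_iff.2 ⟨by linarith, by linarith⟩
  nlinarith [abs_nonneg (‖imResolvent T η ψ‖ ^ 2 - ‖imResolvent T η' ψ‖ ^ 2)]

theorem exists_tendsto_imResolvent (hT : IsSelfAdjoint T) (ψ : H)
    (hbdd : BddAbove ((fun η => ‖imResolvent T η ψ‖ ^ 2) '' Ioi 0)) :
    ∃ φ₀, Tendsto (fun η => imResolvent T η ψ) (𝓝[>] 0) (𝓝 φ₀) ∧ T φ₀ = ψ ∧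
      ‖φ₀‖ ^ 2 = sSup ((fun η => ‖imResolvent T η ψ‖ ^ 2) '' Ioi 0) := by
  have hnorm := (antitoneOn_norm_imResolvent_sq hT ψ).tendsto_nhdsGT hbdd
  have hcauchy : Cauchy ((𝓝[>] (0 : ℝ)).map fun η => imResolvent T η ψ) := by
    refine cauchy_map_of_dist_sq_le hnorm ?_
    filter_upwards [prod_mem_prod self_mem_nhdsWithin self_mem_nhdsWithin] with p hp
    rw [dist_eq_norm]
    exact norm_imResolvent_sub_sq_le hT ψ hp.1 hp.2
  obtain ⟨φ₀, hφ₀⟩ := cauchy_map_iff_exists_tendsto.1 hcauchy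
  refine ⟨φ₀, hφ₀, ?_, tendsto_nhds_unique (hφ₀.norm.pow 2) hnorm⟩
  have hT_lim : Tendsto (fun η : ℝ => ψ + ((η : ℂ) * I) • imResolvent T η ψ) (𝓝[>] 0)
      (𝓝 (ψ + ((0 : ℝ) * I) • φ₀)) :=
    tendsto_const_nhds.add
      (((Complex.continuous_ofReal.mul continuous_const).tendsto 0).mono_left
        nhdsWithin_le_nhds |>.smul hφ₀)
  refine tendsto_nhds_unique_of_eventuallyEq ((T.continuous.tendsto φ₀).comp hφ₀)
    (by simpa using hT_lim) ?_
  filter_upwards [self_mem_nhdsWithin] with η (hη : 0 < η)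
  exact sub_eq_iff_eq_add.1 (apply_imResolvent_sub_I_smul hT hη.ne' ψ)

theorem inner_eq_zero_of_tendsto_imResolvent (hT : IsSelfAdjoint T) {ψ φ₀ w : H}
    (hφ₀ : Tendsto (fun η => imResolvent T η ψ) (𝓝[>] 0) (𝓝 φ₀)) (hw : T w = 0)
    (hψw : ⟪ψ, w⟫_ℂ = 0) : ⟪φ₀, w⟫_ℂ = 0 := by
  refine tendsto_nhds_unique_of_eventuallyEq (hφ₀.inner tendsto_const_nhds) tendsto_const_nhds ?_
  filter_upwards [self_mem_nhdsWithin] with η (hη : 0 < η)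
  have h := inner_sub_I_smul_of_apply_eq_zero hT.isSymmetric η (imResolvent T η ψ) hw
  rw [apply_imResolvent_sub_I_smul hT hη.ne', hψw] at h
  simpa [hη.ne'] using h.symm

theorem exists_apply_eq_and_inner_eq_iff (hT : IsSelfAdjoint T) (ψ : H) (a : ℂ) :
    (∃ φ, T φ = ψ ∧ ⟪ψ, φ⟫_ℂ = a) ↔
      BddAbove ((fun η => ‖imResolvent T η ψ‖ ^ 2) '' Ioi 0) ∧
        Tendsto (fun η => ⟪ψ, imResolvent T η ψ⟫_ℂ) (𝓝[>] 0) (𝓝 a) := by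
  constructor
  · rintro ⟨φ, rfl, rfl⟩
    refine ⟨⟨(2 * ‖φ‖) ^ 2, ?_⟩,
      (tendsto_inner_imResolvent_apply hT φ).mono_left (nhdsGT_le_nhdsNE 0)⟩
    rintro _ ⟨η, hη, rfl⟩
    exact pow_le_pow_left₀ (norm_nonneg _) (norm_imResolvent_apply_le hT (ne_of_gt hη) φ) 2
  · rintro ⟨hbdd, hlim⟩
    obtain ⟨φ₀, hφ₀, hTφ₀, -⟩ := exists_tendsto_imResolvent hT ψ hbdd
    exact ⟨φ₀, hTφ₀, tendsto_nhds_unique (tendsto_const_nhds.inner hφ₀) hlim⟩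

end Resolvent

section RankOne

variable {H : Type*} [NormedAddCommGroup H] [InnerProductSpace ℂ H] {T : H →L[ℂ] H} {ψ : H}

theorem exists_eigenvector_iff_exists_apply_eq {v : ℂ} (hv : v ≠ 0) :
    (∃ φ, φ ≠ 0 ∧ T φ = -(v * ⟪ψ, φ⟫_ℂ) • ψ ∧ ⟪ψ, φ⟫_ℂ ≠ 0) ↔
      ∃ φ, T φ = ψ ∧ ⟪ψ, φ⟫_ℂ = -1 / v := by
  constructor
  · rintro ⟨φ, -, hφ, hψφ⟩
    have hc : -(v * ⟪ψ, φ⟫_ℂ) ≠ 0 := neg_ne_zero.2 (mul_ne_zero hv hψφ)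
    refine ⟨(-(v * ⟪ψ, φ⟫_ℂ))⁻¹ • φ, by rw [map_smul, hφ, inv_smul_smul₀ hc], ?_⟩
    rw [inner_smul_right]
    field_simp
  · rintro ⟨φ, hφ, hψφ⟩
    have hψφ0 : ⟪ψ, φ⟫_ℂ ≠ 0 := by rw [hψφ]; simp [hv]
    refine ⟨φ, fun h => hψφ0 (by rw [h, inner_zero_right]), ?_, hψφ0⟩
    rw [hφ, hψφ, show -(v * (-1 / v)) = 1 by field_simp, one_smul]

theorem inner_proj_eigenspace_eq {φ₀ χ : H} {v : ℝ} (hv : v ≠ 0) (hφ₀ : T φ₀ = ψ)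
    (hψφ₀ : ⟪ψ, φ₀⟫_ℂ = -1 / v) (hker : ∀ w, T w = 0 → ⟪φ₀, w⟫_ℂ = 0)
    (hχ : T χ = -(v * ⟪ψ, χ⟫_ℂ) • ψ)
    (horth : ∀ φ, T φ = -(v * ⟪ψ, φ⟫_ℂ) • ψ → ⟪ψ - χ, φ⟫_ℂ = 0) :
    ⟪ψ, χ⟫_ℂ = (((v ^ 2)⁻¹ / ‖φ₀‖ ^ 2 : ℝ) : ℂ) := by
  have hvC : (v : ℂ) ≠ 0 := Complex.ofReal_ne_zero.2 hv
  have hφ₀eig : T φ₀ = -(v * ⟪ψ, φ₀⟫_ℂ) • ψ := by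
    rw [hφ₀, hψφ₀, show -((v : ℂ) * (-1 / v)) = 1 by field_simp, one_smul]
  have hχφ₀ : ⟪φ₀, χ⟫_ℂ = -1 / v := by
    have h := horth φ₀ hφ₀eig
    rw [inner_sub_left, sub_eq_zero, hψφ₀] at h
    rw [← inner_conj_symm, ← h]
    simp
  have h := hker (χ + (v * ⟪ψ, χ⟫_ℂ) • φ₀) (by rw [map_add, map_smul, hχ, hφ₀, neg_smul,
    neg_add_cancel])
  rw [inner_add_right, inner_smul_right, hχφ₀, inner_self_eq_norm_sq_to_K] at h
  have hφ₀0 : φ₀ ≠ 0 := by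
    rintro rfl
    rw [inner_zero_right] at hψφ₀
    exact div_ne_zero (neg_ne_zero.2 one_ne_zero) hvC hψφ₀.symm
  have hn : (‖φ₀‖ : ℂ) ≠ 0 := Complex.ofReal_ne_zero.2 (norm_ne_zero_iff.2 hφ₀0)
  field_simp at h
  push_cast
  field_simp
  linear_combination h

end RankOne

theorem stmt16_general {G : Type*}
    (H₀ : lp (fun _ : G => ℂ) 2 →L[ℂ] lp (fun _ : G => ℂ) 2) (hH₀ : IsSelfAdjoint H₀)
    (ψ : lp (fun _ : G => ℂ) 2)
    (P : lp (fun _ : G => ℂ) 2 →L[ℂ] lp (fun _ : G => ℂ) 2)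
    (hP : ∀ φ, P φ = (inner ℂ ψ φ : ℂ) • ψ)
    (v : ℝ) (hv : v ≠ 0) (E : ℝ) (γ : ℝ≥0∞)
    (hγ : γ = ⨆ η : {η : ℝ // 0 < η}, ENNReal.ofReal
      (‖Ring.inverse (H₀ - ((E : ℂ) + (η : ℝ) * Complex.I) • 1) ψ‖ ^ 2)) :
    ((∃ φ, φ ≠ 0 ∧ (H₀ + (v : ℂ) • P) φ = (E : ℂ) • φ ∧ (inner ℂ ψ φ : ℂ) ≠ 0) ↔
      (γ < ⊤ ∧ Tendsto
        (fun η : ℝ => (inner ℂ ψ (Ring.inverse (H₀ - ((E : ℂ) + η * Complex.I) • 1) ψ) : ℂ))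
        (𝓝[>] 0) (𝓝 (-1 / v)))) ∧
    ((∃ φ, φ ≠ 0 ∧ (H₀ + (v : ℂ) • P) φ = (E : ℂ) • φ ∧ (inner ℂ ψ φ : ℂ) ≠ 0) →
      ∀ χ : lp (fun _ : G => ℂ) 2,
        (H₀ + (v : ℂ) • P) χ = (E : ℂ) • χ →
        (∀ φ, (H₀ + (v : ℂ) • P) φ = (E : ℂ) • φ → (inner ℂ (ψ - χ) φ : ℂ) = 0) →
        (inner ℂ ψ χ : ℂ) = (((v ^ 2)⁻¹ / γ.toReal : ℝ) : ℂ)) := by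
  set T := H₀ - (E : ℂ) • 1
  have hT : IsSelfAdjoint T :=
    hH₀.sub (((Complex.im_eq_zero_iff_isSelfAdjoint _).1 rfl).smul (.one _))
  have hR (η : ℝ) : Ring.inverse (H₀ - ((E : ℂ) + η * I) • 1) = imResolvent T η := by
    rw [imResolvent, add_smul, sub_add_eq_sub_sub]
  have heig (φ) : (H₀ + (v : ℂ) • P) φ = (E : ℂ) • φ ↔ T φ = -((v : ℂ) * ⟪ψ, φ⟫_ℂ) • ψ := by
    simp only [T, add_apply, sub_apply, smul_apply, one_apply_eq_self, hP, smul_smul]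
    constructor <;> intro h <;> linear_combination (norm := module) h
  simp only [hR, heig] at hγ ⊢
  set f := fun η => ‖imResolvent T η ψ‖ ^ 2
  have hγ_lt_top : γ < ⊤ ↔ BddAbove (f '' Ioi 0) := by
    rw [hγ, ENNReal.iSup_ofReal_lt_top_iff, image_eq_range]
    rfl
  have hγ_toReal : γ.toReal = sSup (f '' Ioi 0) := by
    rw [hγ, ENNReal.toReal_iSup (fun _ => ENNReal.ofReal_ne_top), sSup_image']
    simp only [ENNReal.toReal_ofReal (sq_nonneg _)]
    rfl
  have hiff := (exists_eigenvector_iff_exists_apply_eq (Complex.ofReal_ne_zero.2 hv)).trans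
    (exists_apply_eq_and_inner_eq_iff hT ψ _)
  rw [hγ_lt_top]
  refine ⟨hiff, fun hex χ hχ horth => ?_⟩
  obtain ⟨hbdd, hlim⟩ := hiff.1 hex
  obtain ⟨φ₀, hφ₀, hTφ₀, hnorm⟩ := exists_tendsto_imResolvent hT ψ hbdd
  have hψφ₀ := tendsto_nhds_unique (tendsto_const_nhds.inner hφ₀) hlim
  rw [hγ_toReal, ← hnorm]
  refine inner_proj_eigenspace_eq hv hTφ₀ hψφ₀ (fun w hw => ?_) hχ horth
  refine inner_eq_zero_of_tendsto_imResolvent hT hφ₀ hw ?_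
  rw [← hTφ₀, hT.isSymmetric.apply_clm, hw, inner_zero_right]

/-- Simon–Wolff rank-one criterion for a point mass: for `H_v = H₀ + vP_ψ`
with `v ≠ 0` and `E ∈ ℝ`, setting `γ = lim_{η↓0} ‖(H₀-(E+iη))⁻¹ψ‖²` (which, by monotonicity,
equals the supremum over `η > 0`), the eigenspace `ker(H_v - E)` is not orthogonal to `ψ`
iff `γ < ∞` and `⟨ψ, (H₀-(E+iη))⁻¹ψ⟩ → -1/v` as `η ↓ 0`; moreover in that case the
orthogonal projection `χ` of `ψ` onto `ker(H_v - E)` satisfies `⟨ψ, χ⟩ = v⁻²/γ`. -/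
theorem stmt16 {G : Type*} [Countable G]
    (H₀ : lp (fun _ : G => ℂ) 2 →L[ℂ] lp (fun _ : G => ℂ) 2) (hH₀ : IsSelfAdjoint H₀)
    (ψ : lp (fun _ : G => ℂ) 2) (hψ : ‖ψ‖ = 1)
    (P : lp (fun _ : G => ℂ) 2 →L[ℂ] lp (fun _ : G => ℂ) 2)
    (hP : ∀ φ, P φ = (inner ℂ ψ φ : ℂ) • ψ)
    (v : ℝ) (hv : v ≠ 0) (E : ℝ) (γ : ℝ≥0∞)
    (hγ : γ = ⨆ η : {η : ℝ // 0 < η}, ENNReal.ofReal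
      (‖Ring.inverse (H₀ - ((E : ℂ) + (η : ℝ) * Complex.I) • 1) ψ‖ ^ 2)) :
    ((∃ φ, φ ≠ 0 ∧ (H₀ + (v : ℂ) • P) φ = (E : ℂ) • φ ∧ (inner ℂ ψ φ : ℂ) ≠ 0) ↔
      (γ < ⊤ ∧ Tendsto
        (fun η : ℝ => (inner ℂ ψ (Ring.inverse (H₀ - ((E : ℂ) + η * Complex.I) • 1) ψ) : ℂ))
        (𝓝[>] 0) (𝓝 (-1 / v)))) ∧
    ((∃ φ, φ ≠ 0 ∧ (H₀ + (v : ℂ) • P) φ = (E : ℂ) • φ ∧ (inner ℂ ψ φ : ℂ) ≠ 0) →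
      ∀ χ : lp (fun _ : G => ℂ) 2,
        (H₀ + (v : ℂ) • P) χ = (E : ℂ) • χ →
        (∀ φ, (H₀ + (v : ℂ) • P) φ = (E : ℂ) • φ → (inner ℂ (ψ - χ) φ : ℂ) = 0) →
        (inner ℂ ψ χ : ℂ) = (((v ^ 2)⁻¹ / γ.toReal : ℝ) : ℂ)) :=
  stmt16_general H₀ hH₀ ψ P hP v hv E γ hγ
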